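/- arXiv:1002.0710 — 3 statements merged into one kernel-verified Lean document; each statement's English description precedes it below -/
import Mathlib

section
/- Let M be a 3×3 integer matrix all of whose eigenvalues have the same modulus r > 1. Then either |det M| is a perfect cube, or the characteristic polynomial of M equals λ³ - s·|det M| for some sign s ∈ {1,-1} (equivalently, M is conjugate over ℂ to the companion matrix of λ³ ∓ |det M|). -/
/-!
Write the characteristic polynomial as `X³ + aX² + bX + c` with roots `x, y, z` of modulus `r`.
Since `conj w = r² / w` for each root and `a` is real, conjugating `a = -(x + y + z)` gives
`a c = r² b`, while `|c| = r³`. If `a = 0` then `b = 0` and the polynomial is `X³ + c`.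
Otherwise `r² = ac / b` is rational, so `r = r³ / r²` is a rational number whose cube is an
integer, hence an integer, and `|det M| = |c| = r³` is a cube.
-/

open Polynomial ComplexConjugate

theorem Polynomial.Monic.exists_eq_X_sub_C_mul_X_sub_C_mul_X_sub_C {k : Type*} [Field k]
    [IsAlgClosed k] {p : k[X]} (hp : p.Monic) (h3 : p.natDegree = 3) :
    ∃ x y z : k, p = (X - C x) * (X - C y) * (X - C z) := by
  obtain ⟨x, y, z, hroots⟩ :=
    Multiset.card_eq_three.mp (IsAlgClosed.card_roots_eq_natDegree.trans h3)
  refine ⟨x, y, z, ?_⟩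
  rw [(IsAlgClosed.splits p).eq_prod_roots_of_monic hp, hroots]
  simp [mul_assoc]

theorem Polynomial.Monic.eq_X_pow_three_add_C {R : Type*} [CommRing R] {f : R[X]}
    (hf : f.Monic) (h3 : f.natDegree = 3) (h2 : f.coeff 2 = 0) (h1 : f.coeff 1 = 0) :
    f = X ^ 3 + C (f.coeff 0) := by
  rw [hf.as_sum, h3]
  simp [Finset.sum_range_succ, h2, h1]

theorem Complex.conj_add_conj_add_conj_mul_eq {r : ℝ} {x y z : ℂ} (hx : ‖x‖ = r) (hy : ‖y‖ = r)
    (hz : ‖z‖ = r) : (conj x + conj y + conj z) * (x * y * z) = r ^ 2 * (x * y + x * z + y * z) := by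
  have hconj : ∀ w : ℂ, ‖w‖ = r → w * conj w = r ^ 2 := fun w hw => by
    rw [Complex.mul_conj, Complex.normSq_eq_norm_sq, hw]; push_cast; rfl
  linear_combination (y * z) * hconj x hx + (x * z) * hconj y hy + (x * y) * hconj z hz

theorem Polynomial.conj_coeff_two_mul_coeff_zero {p : ℂ[X]} {r : ℝ} (hp : p.Monic)
    (h3 : p.natDegree = 3) (h : ∀ z : ℂ, p.IsRoot z → ‖z‖ = r) :
    conj (p.coeff 2) * p.coeff 0 = r ^ 2 * p.coeff 1 ∧ ‖p.coeff 0‖ = r ^ 3 := by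
  obtain ⟨x, y, z, rfl⟩ := hp.exists_eq_X_sub_C_mul_X_sub_C_mul_X_sub_C h3
  have hx : ‖x‖ = r := h x (by simp)
  have hy : ‖y‖ = r := h y (by simp)
  have hz : ‖z‖ = r := h z (by simp)
  have hexp : (X - C x) * (X - C y) * (X - C z) = X ^ 3 - C (x + y + z) * X ^ 2
      + C (x * y + x * z + y * z) * X - C (x * y * z) := by
    simp only [C_add, C_mul]; ring
  rw [hexp]
  simp only [coeff_sub, coeff_add, coeff_C_mul_X_pow, coeff_C_mul_X, coeff_X_pow, coeff_C]
  norm_num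
  constructor
  · linear_combination Complex.conj_add_conj_add_conj_mul_eq hx hy hz
  · rw [hx, hy, hz]; ring

theorem Real.exists_intCast_eq_of_sq_eq_ratCast_of_pow_three_eq_intCast {r : ℝ} {q : ℚ} {m : ℤ}
    (hq : r ^ 2 = q) (hm : r ^ 3 = m) : ∃ n : ℤ, r = n := by
  by_cases hr : r = 0
  · exact ⟨0, by simp [hr]⟩
  have hq0 : (q : ℝ) ≠ 0 := hq ▸ pow_ne_zero 2 hr
  have hrat : r = ((m / q : ℚ) : ℝ) := by
    push_cast
    rw [← hm, ← hq]
    field_simp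
  by_contra hint
  exact irrational_nrt_of_notint_nrt 3 m hm hint (by norm_num) ⟨_, hrat.symm⟩

theorem Int.exists_natAbs_eq_pow_three_or_eq_zero_and_eq_zero {a b c : ℤ} {r : ℝ}
    (hrel : (a * c : ℝ) = r ^ 2 * b) (hnorm : |(c : ℝ)| = r ^ 3) :
    (∃ n : ℕ, c.natAbs = n ^ 3) ∨ (a = 0 ∧ b = 0) := by
  by_cases hc : c = 0
  · exact Or.inl ⟨0, by simp [hc]⟩
  have hr : r ≠ 0 := by
    rintro rfl
    simp [hc] at hnorm
  by_cases ha : a = 0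
  · refine Or.inr ⟨ha, ?_⟩
    simpa [ha, hr] using hrel
  have hb : (b : ℝ) ≠ 0 := by
    intro hb
    simp [hb, ha, hc] at hrel
  obtain ⟨n, rfl⟩ : ∃ n : ℤ, r = n := by
    refine Real.exists_intCast_eq_of_sq_eq_ratCast_of_pow_three_eq_intCast (q := a * c / b)
      (m := |c|) ?_ (by push_cast; exact hnorm.symm)
    push_cast
    rw [hrel]
    field_simp
  have hcn : |c| = n ^ 3 := by exact_mod_cast hnorm
  exact Or.inl ⟨n.natAbs, by rw [← Int.natAbs_abs, hcn, Int.natAbs_pow]⟩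

theorem stmt0_general (M : Matrix (Fin 3) (Fin 3) ℤ) (r : ℝ)
    (h : ∀ z : ℂ, ((M.map (Int.cast : ℤ → ℂ)).charpoly).IsRoot z → ‖z‖ = r) :
    (∃ n : ℕ, M.det.natAbs = n ^ 3) ∨
      ∃ s : ℤ, (s = 1 ∨ s = -1) ∧
        (M.map (Int.cast : ℤ → ℂ)).charpoly =
          Polynomial.X ^ 3 - Polynomial.C ((s * (M.det.natAbs : ℤ) : ℤ) : ℂ) := by
  set f := M.charpoly
  have hmonic : f.Monic := M.charpoly_monic
  have hdeg : f.natDegree = 3 := by simp [f, M.charpoly_natDegree_eq_dim]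
  have hmap : (M.map (Int.cast : ℤ → ℂ)).charpoly = f.map (Int.castRingHom ℂ) :=
    M.charpoly_map (Int.castRingHom ℂ)
  have hdet : M.det = -f.coeff 0 := by simpa using M.det_eq_sign_charpoly_coeff
  obtain ⟨hrel, hnorm⟩ := conj_coeff_two_mul_coeff_zero (hmonic.map _)
    (by rwa [hmonic.natDegree_map]) (hmap ▸ h)
  simp only [coeff_map, eq_intCast, map_intCast, Complex.norm_intCast] at hrel hnorm
  rcases Int.exists_natAbs_eq_pow_three_or_eq_zero_and_eq_zero (by exact_mod_cast hrel) hnorm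
    with hcube | ⟨h2, h1⟩
  · left; rwa [hdet, Int.natAbs_neg]
  · right
    have hcubic : f = X ^ 3 - C M.det := by
      rw [hmonic.eq_X_pow_three_add_C hdeg h2 h1, hdet, map_neg, sub_neg_eq_add]
    rcases Int.natAbs_eq M.det with hs | hs
    · exact ⟨1, Or.inl rfl, by rw [hmap, hcubic, one_mul, ← hs]; simp⟩
    · exact ⟨-1, Or.inr rfl, by rw [hmap, hcubic, neg_one_mul, ← hs]; simp⟩

/-- If all complex eigenvalues of a 3×3 integer matrix `M` have the same
modulus `r > 1`, then either `|det M|` is a perfect cube, or the characteristic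
polynomial of `M` (over ℂ) equals `X ^ 3 - s * |det M|` for a sign `s`. -/
theorem stmt0 (M : Matrix (Fin 3) (Fin 3) ℤ) (r : ℝ) (hr : 1 < r)
    (h : ∀ z : ℂ, ((M.map (Int.cast : ℤ → ℂ)).charpoly).IsRoot z → ‖z‖ = r) :
    (∃ n : ℕ, M.det.natAbs = n ^ 3) ∨
      ∃ s : ℤ, (s = 1 ∨ s = -1) ∧
        (M.map (Int.cast : ℤ → ℂ)).charpoly =
          Polynomial.X ^ 3 - Polynomial.C ((s * (M.det.natAbs : ℤ) : ℤ) : ℂ) :=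
  stmt0_general M r h
end

section
/- Let p(λ) = -λ³ + aλ² + bλ + c be a cubic with integer coefficients a, b, c whose complex roots are λ₁ = r(cos α + i sin α), λ₂ = r(cos α - i sin α), λ₃ = s·r with s = ±1 and r > 0 irrational. Then cos α = -s/2, and consequently p(λ) = -λ³ + s·r³. -/
/-! Eliminating `cos α` between the Vieta relations for `a` and `b` (using `s² = 1`) gives
`a r = -s b`, an integral linear relation for the irrational `r`; hence `a = 0` and `b = 0`, and
`a = 2 r cos α + s r = 0` then forces `cos α = -s / 2`. -/

theorem Irrational.eq_zero_of_intCast_mul_eq_intCast {x : ℝ} (hx : Irrational x) {m n : ℤ}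
    (h : (m : ℝ) * x = n) : m = 0 := by
  by_contra hm
  exact (hx.intCast_mul hm).ne_int n h

theorem stmt1_general (a b : ℤ) (r α s : ℝ) (hs : s = 1 ∨ s = -1)
    (hirr : Irrational r)
    (ha : (a : ℝ) = 2 * r * Real.cos α + s * r)
    (hb : (b : ℝ) = -(r ^ 2 + 2 * s * r ^ 2 * Real.cos α)) :
    Real.cos α = -s / 2 ∧ a = 0 ∧ b = 0 := by
  obtain ⟨t, rfl, ht⟩ : ∃ t : ℤ, s = t ∧ t * t = 1 := by
    rcases hs with rfl | rfl
    exacts [⟨1, by norm_num⟩, ⟨-1, by norm_num⟩]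
  have ht' : (t : ℝ) * t = 1 := mod_cast ht
  have hvieta : (a : ℝ) * r = ((-(t * b) : ℤ) : ℝ) := by
    push_cast
    rw [ha, hb]
    linear_combination (-2 * r ^ 2 * Real.cos α) * ht'
  have ha0 : a = 0 := hirr.eq_zero_of_intCast_mul_eq_intCast hvieta
  have hb0 : b = 0 := by
    have ht0 : t ≠ 0 := by rintro rfl; simp at ht
    simpa [ha0, ht0] using hvieta
  refine ⟨?_, ha0, hb0⟩
  have hcos : r * (2 * Real.cos α + t) = 0 := by
    rw [ha0, Int.cast_zero] at ha
    linear_combination -ha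
  linear_combination ((mul_eq_zero.mp hcos).resolve_left hirr.ne_zero) / 2

/-- If `-λ³ + aλ² + bλ + c` has integer coefficients and roots
`r e^{±iα}` and `s·r` with `s = ±1` and `r > 0` irrational, then `cos α = -s/2`
and consequently `a = 0` and `b = 0` (so `p(λ) = -λ³ + s r³`). -/
theorem stmt1 (a b c : ℤ) (r α s : ℝ) (hs : s = 1 ∨ s = -1)
    (hr : 0 < r) (hirr : Irrational r)
    (ha : (a : ℝ) = 2 * r * Real.cos α + s * r)
    (hb : (b : ℝ) = -(r ^ 2 + 2 * s * r ^ 2 * Real.cos α))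
    (hc : (c : ℝ) = s * r ^ 3) :
    Real.cos α = -s / 2 ∧ a = 0 ∧ b = 0 :=
  stmt1_general a b r α s hs hirr ha hb
end

section
/- Up to sign of the determinant, the integer pairs (a,b) for which all complex roots of p(λ) = -λ³ + aλ² + bλ + 2 have modulus strictly greater than 1 are exactly the seven pairs (0,0), (-1,1), (1,-1), (0,1), (2,-2), (1,0), (0,2). -/
/-!
The roots of `q = X³ - aX² - bX - 2` (those of the given cubic) have product `2`. If all of
them have modulus `> 1`, each has modulus `< 2`, so every real root `x` satisfies `1 < |x| < 2`. Conversely this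
condition on the real roots suffices: a nonreal root `z` comes with `z̄`, and the third root
`r = a - 2 Re z` is real with `r |z|² = 2`, so `|z|² = 2 / |r| > 1`. By the intermediate value
theorem the real-root condition forces `q` to be negative at `1`, `-1`, `-2` and positive
at `2`; these four linear inequalities in `(a, b)` leave exactly the seven listed integer pairs,
and for each of them the real roots are checked directly.
-/

open Polynomial

noncomputable def monicCubic {R : Type*} [CommRing R] (a b c : R) : R[X] :=
  X ^ 3 - C a * X ^ 2 - C b * X - C c

section MonicCubic

variable {R : Type*} [CommRing R] (a b c : R)

@[simp]
theorem eval_monicCubic (x : R) :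
    (monicCubic a b c).eval x = x ^ 3 - a * x ^ 2 - b * x - c := by
  simp [monicCubic]

theorem monicCubic_monic [Nontrivial R] : (monicCubic a b c).Monic := by
  unfold monicCubic; monicity!

theorem natDegree_monicCubic [Nontrivial R] : (monicCubic a b c).natDegree = 3 := by
  unfold monicCubic; compute_degree!

theorem degree_monicCubic [Nontrivial R] : (monicCubic a b c).degree = 3 := by
  unfold monicCubic; compute_degree!

@[simp]
theorem coeff_zero_monicCubic : (monicCubic a b c).coeff 0 = -c := by
  simp [monicCubic]

theorem eval_neg_monicCubic (x : R) :
    (monicCubic a b c).eval (-x) = -(monicCubic (-a) b (-c)).eval x := by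
  simp only [eval_monicCubic]; ring

end MonicCubic

theorem norm_lt_norm_coeff_zero_of_one_lt_norm_roots {p : ℂ[X]} (hp : p.Monic)
    (hdeg : 2 ≤ p.natDegree) (h : ∀ w ∈ p.roots, 1 < ‖w‖) {z : ℂ} (hz : z ∈ p.roots) :
    ‖z‖ < ‖p.coeff 0‖ := by
  have hsplit : p.Splits := IsAlgClosed.splits p
  obtain ⟨t, ht⟩ := Multiset.exists_cons_of_mem hz
  obtain ⟨w, hw⟩ : ∃ w, w ∈ t := by
    have hcard := hsplit.natDegree_eq_card_roots
    rw [ht, Multiset.card_cons] at hcard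
    exact Multiset.card_pos_iff_exists_mem.mp (by omega)
  obtain ⟨s, hs⟩ := Multiset.exists_cons_of_mem hw
  have hs1 : 1 ≤ ‖s.prod‖ := by
    rw [← normHom_apply, map_multiset_prod (normHom : ℂ →*₀ ℝ)]
    exact Multiset.one_le_prod_map fun v hv => (h v (by simp [ht, hs, hv])).le
  have hw1 : 1 < ‖w‖ := h w (by simp [ht, hw])
  have hz1 : 1 < ‖z‖ := h z hz
  rw [hsplit.coeff_zero_eq_prod_roots_of_monic hp, ht, hs]
  simp only [norm_mul, norm_pow, norm_neg, norm_one, one_pow, one_mul, Multiset.prod_cons]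
  calc ‖z‖ < ‖z‖ * ‖w‖ := lt_mul_of_one_lt_right (by positivity) hw1
    _ ≤ ‖z‖ * (‖w‖ * ‖s.prod‖) := by
      rw [← mul_assoc]; exact le_mul_of_one_le_right (by positivity) hs1

theorem monicCubic_isRoot_of_im_ne_zero (a b c : ℝ) {z : ℂ}
    (hz : (monicCubic (a : ℂ) b c).IsRoot z) (hy : z.im ≠ 0) :
    (monicCubic a b c).IsRoot (a - 2 * z.re) ∧ (a - 2 * z.re) * Complex.normSq z = c := by
  have hre := congrArg Complex.re hz
  have him := congrArg Complex.im hz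
  simp [pow_succ, Complex.mul_re, Complex.mul_im] at hre him
  have hb : b = 3 * z.re ^ 2 - z.im ^ 2 - 2 * a * z.re := by
    apply mul_left_cancel₀ hy
    linear_combination -him
  constructor
  · simp only [IsRoot.def, eval_monicCubic]
    linear_combination hre + (3 * z.re - a) * hb
  · rw [Complex.normSq_apply]
    linear_combination hre + z.re * hb

theorem one_lt_norm_roots_monicCubic_iff (a b c : ℝ) :
    (∀ z : ℂ, (monicCubic (a : ℂ) b c).IsRoot z → 1 < ‖z‖) ↔
      ∀ x : ℝ, (monicCubic a b c).IsRoot x → 1 < |x| ∧ |x| < |c| := by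
  have hcast (x : ℝ) : (monicCubic (a : ℂ) b c).IsRoot x ↔ (monicCubic a b c).IsRoot x := by
    simp only [IsRoot.def, eval_monicCubic]
    exact_mod_cast Iff.rfl
  have hmem (w : ℂ) : w ∈ (monicCubic (a : ℂ) b c).roots ↔ (monicCubic (a : ℂ) b c).IsRoot w :=
    mem_roots (monicCubic_monic _ _ _).ne_zero
  constructor
  · intro h x hx
    have hxC := (hcast x).mpr hx
    have hlt := norm_lt_norm_coeff_zero_of_one_lt_norm_roots (monicCubic_monic _ _ _)
      (by rw [natDegree_monicCubic]; norm_num) (fun w hw => h w ((hmem w).mp hw))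
      ((hmem x).mpr hxC)
    have h1 := h x hxC
    simp only [Complex.norm_real, Real.norm_eq_abs, coeff_zero_monicCubic, norm_neg] at h1 hlt
    exact ⟨h1, hlt⟩
  · intro h z hz
    by_cases hy : z.im = 0
    · have hz' : z = (z.re : ℂ) := Complex.ext rfl (by simpa using hy)
      rw [hz'] at hz ⊢
      simpa using (h z.re ((hcast _).mp hz)).1
    · obtain ⟨hr, hrc⟩ := monicCubic_isRoot_of_im_ne_zero a b c hz hy
      obtain ⟨hr1, hrc'⟩ := h _ hr
      have hnormSq : 1 < Complex.normSq z := by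
        have habs := congrArg abs hrc
        rw [abs_mul, abs_of_nonneg (Complex.normSq_nonneg z)] at habs
        nlinarith
      rw [Complex.normSq_eq_norm_sq] at hnormSq
      nlinarith [norm_nonneg z]

theorem Polynomial.exists_isRoot_ge_of_eval_nonpos {P : ℝ[X]} (hdeg : 0 < P.degree)
    (hlc : 0 ≤ P.leadingCoeff) {u : ℝ} (hu : P.eval u ≤ 0) : ∃ x ≥ u, P.IsRoot x := by
  obtain ⟨x, hx, hx0⟩ := intermediate_value_Ici P.continuousOn
    (P.tendsto_atTop_of_leadingCoeff_nonneg hdeg hlc) hu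
  exact ⟨x, hx, hx0⟩

theorem exists_isRoot_monicCubic_ge (a b c : ℝ) {u : ℝ} (hu : (monicCubic a b c).eval u ≤ 0) :
    ∃ x ≥ u, (monicCubic a b c).IsRoot x :=
  exists_isRoot_ge_of_eval_nonpos (by rw [degree_monicCubic]; norm_num)
    (by rw [(monicCubic_monic a b c).leadingCoeff]; norm_num) hu

theorem eval_monicCubic_signs_of_abs_roots {a b c : ℝ} (hc : 0 < c)
    (h : ∀ x : ℝ, (monicCubic a b c).IsRoot x → 1 < |x| ∧ |x| < c) :
    (monicCubic a b c).eval 1 < 0 ∧ (monicCubic a b c).eval (-1) < 0 ∧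
      0 < (monicCubic a b c).eval c ∧ (monicCubic a b c).eval (-c) < 0 := by
  have heval0 : (monicCubic a b c).eval 0 < 0 := by simpa using hc
  refine ⟨?_, ?_, ?_, ?_⟩ <;> by_contra! hsign
  · obtain ⟨x, hx, hroot⟩ :=
      intermediate_value_Icc zero_le_one (monicCubic a b c).continuousOn ⟨heval0.le, hsign⟩
    linarith [(h x hroot).1, abs_of_nonneg hx.1, hx.2]
  · obtain ⟨x, hx, hroot⟩ := intermediate_value_Icc' (by norm_num : (-1 : ℝ) ≤ 0)
      (monicCubic a b c).continuousOn ⟨heval0.le, hsign⟩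
    linarith [(h x hroot).1, abs_of_nonpos hx.2, hx.1]
  · obtain ⟨x, hx, hroot⟩ := exists_isRoot_monicCubic_ge a b c hsign
    linarith [(h x hroot).2, le_abs_self x]
  · rw [eval_neg_monicCubic, neg_nonneg] at hsign
    obtain ⟨x, hx, hroot⟩ := exists_isRoot_monicCubic_ge (-a) b (-c) hsign
    have hroot' : (monicCubic a b c).IsRoot (-x) := by
      rw [IsRoot.def, eval_neg_monicCubic, hroot.eq_zero, neg_zero]
    linarith [(h _ hroot').2, abs_neg x, le_abs_self x]

theorem abs_roots_monicCubic_of_mem (a b : ℤ)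
    (h : (a, b) = (0, 0) ∨ (a, b) = (-1, 1) ∨ (a, b) = (1, -1) ∨ (a, b) = (0, 1) ∨
      (a, b) = (2, -2) ∨ (a, b) = (1, 0) ∨ (a, b) = (0, 2))
    (x : ℝ) (hx : (monicCubic (a : ℝ) b 2).IsRoot x) : 1 < |x| ∧ |x| < 2 := by
  rw [IsRoot.def, eval_monicCubic] at hx
  simp only [Prod.mk.injEq] at h
  constructor
  · by_contra! hle
    obtain ⟨h1, h2⟩ := abs_le.mp hle
    have hx2 := mul_nonneg (sub_nonneg.2 h1) (sub_nonneg.2 h2)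
    rcases h with ⟨rfl, rfl⟩ | ⟨rfl, rfl⟩ | ⟨rfl, rfl⟩ | ⟨rfl, rfl⟩ | ⟨rfl, rfl⟩ | ⟨rfl, rfl⟩ |
        ⟨rfl, rfl⟩ <;> push_cast at hx <;>
      nlinarith [sq_nonneg x, mul_nonneg hx2 (sq_nonneg x)]
  · by_contra! hle
    rcases le_abs'.mp hle with h2 | h2 <;>
    rcases h with ⟨rfl, rfl⟩ | ⟨rfl, rfl⟩ | ⟨rfl, rfl⟩ | ⟨rfl, rfl⟩ | ⟨rfl, rfl⟩ | ⟨rfl, rfl⟩ |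
        ⟨rfl, rfl⟩ <;> push_cast at hx <;>
      nlinarith [sq_nonneg x, sq_nonneg (x - 1), sq_nonneg (x + 1)]

/-- The integer pairs `(a,b)` such that every complex root of
`-λ³ + aλ² + bλ + 2` has modulus `> 1` are exactly the seven listed pairs. -/
theorem stmt3 :
    {p : ℤ × ℤ | ∀ z : ℂ,
        -z ^ 3 + (p.1 : ℂ) * z ^ 2 + (p.2 : ℂ) * z + 2 = 0 → 1 < ‖z‖} =
      {((0 : ℤ), (0 : ℤ)), (-1, 1), (1, -1), (0, 1), (2, -2), (1, 0), (0, 2)} := by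
  ext ⟨a, b⟩
  have hroot (z : ℂ) : -z ^ 3 + (a : ℂ) * z ^ 2 + (b : ℂ) * z + 2 = 0 ↔
      (monicCubic ((a : ℝ) : ℂ) ((b : ℝ) : ℂ) ((2 : ℝ) : ℂ)).IsRoot z := by
    rw [IsRoot.def, eval_monicCubic]
    push_cast
    constructor <;> intro h <;> linear_combination -h
  simp only [Set.mem_ofPred_eq, Set.mem_insert_iff, Set.mem_singleton_iff, hroot,
    one_lt_norm_roots_monicCubic_iff, abs_two]
  refine ⟨fun h => ?_, abs_roots_monicCubic_of_mem a b⟩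
  obtain ⟨h1, h2, h3, h4⟩ := eval_monicCubic_signs_of_abs_roots two_pos h
  simp only [eval_monicCubic] at h1 h2 h3 h4
  have hlin : -1 < a + b ∧ b < a + 3 ∧ 2 * a + b < 3 ∧ b < 2 * a + 5 := by
    refine ⟨?_, ?_, ?_, ?_⟩ <;> rify <;> linarith
  simp only [Prod.mk.injEq]
  omega
end
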